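/- Let k be a positive even integer and let f be a cusp form of weight k for the full modular group SL₂(ℤ) such that f(iy) is a (strictly) positive real number for every real y > 1. Define Λ_f(s) = ∫_1^∞ f(iy) · ((−1)^{k/2} y^{(k−1)/2−s} + y^{s+(k−3)/2}) dy. Then for every natural number m, the m-th derivative Λ_f^{(m)}(1/2) is a nonnegative real number. -/

import Mathlib

open Complex UpperHalfPlane

/-- The restriction of a function on the upper half-plane to the positive imaginary
axis: `atI f y = f(iy)` for `y > 0` (junk value `0` otherwise). -/
noncomputable def atI (f : ℍ → ℂ) (y : ℝ) : ℂ :=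
  if h : 0 < y then f ⟨Complex.I * y, by simpa using h⟩ else 0

/-!
Let `g(y) = f(iy)` for `y > 1` and `g(y) = 0` otherwise, and let `M` denote the Mellin transform.
Then `Λ(s) = (-1)^{k/2} M g((k+1)/2 - s) + M g(s + (k-1)/2)`. Since `g` vanishes near `0` and `f`
decays exponentially at the cusp, `M g` is entire with `(M g)^{(m)} = M (log^m · g)`, and as the two arguments meet at
`s = 1/2`,
  `Λ^{(m)}(1/2) = ((-1)^{k/2+m} + 1) · M (log^m · g)(k/2)`.
Both factors are nonnegative: `log^m · g ≥ 0` on `(0, ∞)`, so its Mellin transform at a real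
point is a nonnegative real number.
-/

open MeasureTheory Set Filter Asymptotics Topology
open scoped ComplexOrder

structure RapidDecayAtZeroAndTop {E : Type*} [NormedAddCommGroup E] (f : ℝ → E) : Prop where
  locallyIntegrableOn : LocallyIntegrableOn f (Ioi 0)
  isBigO_atTop : ∀ a : ℝ, f =O[atTop] (· ^ (-a))
  isBigO_nhdsGT_zero : ∀ b : ℝ, f =O[𝓝[>] 0] (· ^ (-b))

namespace RapidDecayAtZeroAndTop

variable {E : Type*} [NormedAddCommGroup E] [NormedSpace ℂ E] {f : ℝ → E}

theorem log_smul (hf : RapidDecayAtZeroAndTop f) :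
    RapidDecayAtZeroAndTop fun t ↦ Real.log t • f t where
  locallyIntegrableOn := hf.locallyIntegrableOn.continuousOn_smul isOpen_Ioi.isLocallyClosed
    (Real.continuousOn_log.mono fun _ ht ↦ (mem_Ioi.mp ht).ne')
  isBigO_atTop a := isBigO_rpow_top_log_smul (lt_add_one a) (hf.isBigO_atTop _)
  isBigO_nhdsGT_zero b := isBigO_rpow_zero_log_smul (sub_one_lt b) (hf.isBigO_nhdsGT_zero _)

theorem mellinConvergent (hf : RapidDecayAtZeroAndTop f) (s : ℂ) : MellinConvergent f s :=
  mellinConvergent_of_isBigO_rpow hf.locallyIntegrableOn (hf.isBigO_atTop _) (lt_add_one s.re)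
    (hf.isBigO_nhdsGT_zero _) (sub_one_lt s.re)

theorem hasDerivAt_mellin (hf : RapidDecayAtZeroAndTop f) (s : ℂ) :
    HasDerivAt (mellin f) (mellin (fun t ↦ Real.log t • f t) s) s :=
  (mellin_hasDerivAt_of_isBigO_rpow hf.locallyIntegrableOn (hf.isBigO_atTop _) (lt_add_one s.re)
    (hf.isBigO_nhdsGT_zero _) (sub_one_lt s.re)).2

theorem differentiable_mellin (hf : RapidDecayAtZeroAndTop f) : Differentiable ℂ (mellin f) :=
  fun s ↦ (hf.hasDerivAt_mellin s).differentiableAt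

theorem iteratedDeriv_mellin (hf : RapidDecayAtZeroAndTop f) (n : ℕ) :
    iteratedDeriv n (mellin f) = mellin fun t ↦ Real.log t ^ n • f t := by
  induction n generalizing f with
  | zero => simp
  | succ n ih =>
    rw [iteratedDeriv_succ', funext fun s ↦ (hf.hasDerivAt_mellin s).deriv, ih hf.log_smul]
    simp_rw [pow_succ, mul_smul]

theorem iteratedDeriv_const_mul_mellin_sub_add_mellin_add {g : ℝ → ℂ}
    (hg : RapidDecayAtZeroAndTop g) (A z w : ℂ) (n : ℕ) (s : ℂ) :
    iteratedDeriv n (fun s ↦ A * mellin g (z - s) + mellin g (s + w)) s =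
      A * (-1) ^ n * mellin (fun t ↦ Real.log t ^ n • g t) (z - s) +
        mellin (fun t ↦ Real.log t ^ n • g t) (s + w) := by
  have hcd : ContDiff ℂ n (mellin g) := hg.differentiable_mellin.contDiff
  rw [iteratedDeriv_fun_add (by fun_prop) (by fun_prop), iteratedDeriv_const_mul_field,
    iteratedDeriv_comp_const_sub, iteratedDeriv_comp_add_const, hg.iteratedDeriv_mellin]
  simp only [smul_eq_mul, mul_assoc]

end RapidDecayAtZeroAndTop

section Indicator

variable {E : Type*} [NormedAddCommGroup E]

theorem mellin_indicator_Ioi [NormedSpace ℂ E] {f : ℝ → E} {a : ℝ} (ha : 0 ≤ a) (s : ℂ) :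
    mellin ((Ioi a).indicator f) s = ∫ t in Ioi a, (t : ℂ) ^ (s - 1) • f t := by
  rw [mellin, ← indicator_smul, setIntegral_indicator measurableSet_Ioi, Ioi_inter_Ioi,
    sup_eq_right.mpr ha]

theorem mellinConvergent_indicator_Ioi [NormedSpace ℂ E] {f : ℝ → E} {a : ℝ} (ha : 0 ≤ a)
    (s : ℂ) : MellinConvergent ((Ioi a).indicator f) s ↔
      IntegrableOn (fun t : ℝ ↦ (t : ℂ) ^ (s - 1) • f t) (Ioi a) := by
  rw [MellinConvergent, ← indicator_smul, integrableOn_indicator_iff measurableSet_Ioi,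
    Ioi_inter_Ioi, sup_eq_left.mpr ha]

theorem ContinuousOn.locallyIntegrableOn_indicator {f : ℝ → E} {s t : Set ℝ} (hs : IsOpen s)
    (hf : ContinuousOn f s) (ht : MeasurableSet t) : LocallyIntegrableOn (t.indicator f) s :=
  (locallyIntegrableOn_iff hs.isLocallyClosed).mpr fun _K hKs hK ↦
    ((hf.mono hKs).integrableOn_compact hK).indicator ht

theorem rapidDecayAtZeroAndTop_indicator_Ioi {f : ℝ → E} {a c : ℝ} (ha : 0 < a)
    (hfc : ContinuousOn f (Ioi 0)) (hc : 0 < c) (hf : f =O[atTop] fun t ↦ Real.exp (-c * t)) :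
    RapidDecayAtZeroAndTop ((Ioi a).indicator f) where
  locallyIntegrableOn := hfc.locallyIntegrableOn_indicator isOpen_Ioi measurableSet_Ioi
  isBigO_atTop b := by
    refine (hf.trans (isLittleO_exp_neg_mul_rpow_atTop hc _).isBigO).congr' ?_ .rfl
    filter_upwards [eventually_gt_atTop a] with t ht
    exact (indicator_of_mem ht f).symm
  isBigO_nhdsGT_zero b := by
    refine (isBigO_zero _ _).congr' ?_ .rfl
    filter_upwards [nhdsWithin_le_nhds (Iio_mem_nhds ha)] with t ht
    exact (indicator_of_notMem (not_lt.mpr ht.le) f).symm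

theorem integral_Ioi_mul_add_cpow_eq_mellin {f : ℝ → ℂ} {a : ℝ} (ha : 0 ≤ a) {z w : ℂ}
    (hz : MellinConvergent ((Ioi a).indicator f) z)
    (hw : MellinConvergent ((Ioi a).indicator f) w) (A : ℂ) :
    ∫ t in Ioi a, f t * (A * (t : ℂ) ^ (z - 1) + (t : ℂ) ^ (w - 1)) =
      A * mellin ((Ioi a).indicator f) z + mellin ((Ioi a).indicator f) w := by
  rw [mellinConvergent_indicator_Ioi ha] at hz hw
  rw [mellin_indicator_Ioi ha, mellin_indicator_Ioi ha, ← integral_const_mul,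
    ← integral_add (hz.const_mul A) hw]
  congr 1 with t
  simp only [smul_eq_mul]
  ring

end Indicator

theorem mellin_nonneg {f : ℝ → ℂ} (hf : ∀ t ∈ Ioi 0, 0 ≤ f t) (σ : ℝ) : 0 ≤ mellin f σ := by
  refine integral_nonneg_of_ae
    ((ae_restrict_iff' measurableSet_Ioi).mpr (ae_of_all _ fun t ht ↦ ?_))
  simp only [Pi.zero_apply, smul_eq_mul]
  rw [← ofReal_one, ← ofReal_sub, ← ofReal_cpow (mem_Ioi.mp ht).le]
  exact mul_nonneg (zero_le_real.mpr (Real.rpow_nonneg (mem_Ioi.mp ht).le _)) (hf t ht)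

theorem log_pow_smul_indicator_Ioi_one_nonneg {f : ℝ → ℂ} (hf : ∀ t, 1 < t → 0 ≤ f t) (n : ℕ)
    (t : ℝ) : 0 ≤ Real.log t ^ n • (Ioi 1).indicator f t := by
  by_cases ht : 1 < t
  · rw [indicator_of_mem (mem_Ioi.mpr ht), real_smul]
    exact mul_nonneg (zero_le_real.mpr (pow_nonneg (Real.log_nonneg ht.le) n)) (hf t ht)
  · rw [indicator_of_notMem (notMem_Ioi.mpr (not_lt.mp ht)), smul_zero]

theorem neg_one_pow_add_one_nonneg {R : Type*} [Ring R] [PartialOrder R] [IsOrderedRing R]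
    (n : ℕ) : (0 : R) ≤ (-1) ^ n + 1 := by
  rcases n.even_or_odd with hn | hn
  · rw [hn.neg_one_pow, one_add_one_eq_two]
    exact zero_le_two
  · rw [hn.neg_one_pow, neg_add_cancel]

theorem atI_eq_ofComplex (f : ℍ → ℂ) {y : ℝ} (hy : 0 < y) :
    atI f y = f (ofComplex (Complex.I * y)) := by
  rw [ofComplex_apply_of_im_pos (by simpa using hy)]
  simp [atI, hy]

theorem continuousOn_atI {f : ℍ → ℂ} (hf : Continuous f) : ContinuousOn (atI f) (Ioi 0) := by
  refine ContinuousOn.congr (fun y hy ↦ ?_) fun y hy ↦ atI_eq_ofComplex f hy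
  have hz : 0 < (Complex.I * y).im := by simpa using hy
  exact (hf.continuousAt.comp ((ofComplex.continuousAt ⟨⟨_, hz⟩, trivial, rfl⟩).comp
    (f := fun y : ℝ ↦ Complex.I * y) (by fun_prop))).continuousWithinAt

theorem tendsto_ofComplex_I_mul_atTop :
    Tendsto (fun y : ℝ ↦ ofComplex (Complex.I * y)) atTop atImInfty :=
  tendsto_comap_im_ofComplex.comp (tendsto_comap_iff.mpr (tendsto_id.congr fun y ↦ by simp))

theorem isBigO_atI {f : ℍ → ℂ} {g : ℝ → ℝ} (hf : f =O[atImInfty] fun τ ↦ g τ.im) :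
    atI f =O[atTop] g := by
  refine (hf.comp_tendsto tendsto_ofComplex_I_mul_atTop).congr' ?_ ?_
  · filter_upwards [eventually_gt_atTop 0] with y hy
    exact (atI_eq_ofComplex f hy).symm
  · filter_upwards [eventually_gt_atTop 0] with y hy
    simp [ofComplex_apply_of_im_pos (show 0 < (Complex.I * y).im by simpa using hy)]

open MeasureTheory Set in
theorem cuspForm_superpositivity_general (k : ℕ)
    (f : CuspForm (⊤ : Subgroup (Matrix.SpecialLinearGroup (Fin 2) ℤ)) (k : ℤ))
    (hf : ∀ y : ℝ, 1 < y → ∃ r : ℝ, 0 < r ∧ atI ⇑f y = r)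
    (Λ : ℂ → ℂ)
    (hΛ : ∀ s : ℂ, Λ s = ∫ y in Ioi (1 : ℝ), atI ⇑f y *
        ((-1 : ℂ) ^ (k / 2) * (y : ℂ) ^ (((k : ℂ) - 1) / 2 - s) +
          (y : ℂ) ^ (s + ((k : ℂ) - 3) / 2))) :
    ∀ m : ℕ, ∃ r : ℝ, 0 ≤ r ∧ iteratedDeriv m Λ (1 / 2) = r := by
  intro m
  obtain ⟨c, hc, hdecay⟩ := CuspFormClass.exp_decay_atImInfty' f
  set g := (Ioi (1 : ℝ)).indicator (atI ⇑f)
  have hg : RapidDecayAtZeroAndTop g := rapidDecayAtZeroAndTop_indicator_Ioi one_pos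
    (continuousOn_atI f.holo'.continuous) hc (isBigO_atI hdecay)
  have hΛg : Λ = fun s ↦
      (-1) ^ (k / 2) * mellin g ((k + 1) / 2 - s) + mellin g (s + (k - 1) / 2) := by
    funext s
    rw [hΛ, show ((k : ℂ) - 1) / 2 - s = ((k + 1) / 2 - s) - 1 by ring,
      show s + ((k : ℂ) - 3) / 2 = (s + (k - 1) / 2) - 1 by ring,
      integral_Ioi_mul_add_cpow_eq_mellin zero_le_one (hg.mellinConvergent _)
        (hg.mellinConvergent _)]
  have hderiv : iteratedDeriv m Λ (1 / 2) =
      ((-1) ^ (k / 2 + m) + 1) * mellin (fun t ↦ Real.log t ^ m • g t) (k / 2 : ℝ) := by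
    rw [hΛg, hg.iteratedDeriv_const_mul_mellin_sub_add_mellin_add,
      show ((k : ℂ) + 1) / 2 - 1 / 2 = (k / 2 : ℝ) by push_cast; ring,
      show 1 / 2 + ((k : ℂ) - 1) / 2 = (k / 2 : ℝ) by push_cast; ring, pow_add]
    ring
  have hf_nonneg : ∀ y : ℝ, 1 < y → 0 ≤ atI ⇑f y := fun y hy ↦ by
    obtain ⟨r, hr, hfr⟩ := hf y hy
    exact hfr ▸ zero_le_real.mpr hr.le
  have hM : 0 ≤ mellin (fun t ↦ Real.log t ^ m • g t) (k / 2 : ℝ) :=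
    mellin_nonneg (fun t _ ↦ log_pow_smul_indicator_Ioi_one_nonneg hf_nonneg m t) _
  obtain ⟨r, hr, hr_eq⟩ := RCLike.nonneg_iff_exists_ofReal.mp
    (hderiv ▸ mul_nonneg (neg_one_pow_add_one_nonneg _) hM)
  exact ⟨r, hr, hr_eq.symm⟩

open MeasureTheory Set in
/-- Super-positivity: if `f` is a cusp form of positive even weight `k` for `SL₂(ℤ)`
with `f(iy)` a strictly positive real number for all real `y > 1`, then every
derivative of `Λ_f(s) = ∫_1^∞ f(iy) ((-1)^{k/2} y^{(k-1)/2-s} + y^{s+(k-3)/2}) dy` at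
`s = 1/2` is a nonnegative real number. -/
theorem cuspForm_superpositivity (k : ℕ) (hk : 0 < k) (hke : Even k)
    (f : CuspForm (⊤ : Subgroup (Matrix.SpecialLinearGroup (Fin 2) ℤ)) (k : ℤ))
    (hf : ∀ y : ℝ, 1 < y → ∃ r : ℝ, 0 < r ∧ atI ⇑f y = r)
    (Λ : ℂ → ℂ)
    (hΛ : ∀ s : ℂ, Λ s = ∫ y in Ioi (1 : ℝ), atI ⇑f y *
        ((-1 : ℂ) ^ (k / 2) * (y : ℂ) ^ (((k : ℂ) - 1) / 2 - s) +
          (y : ℂ) ^ (s + ((k : ℂ) - 3) / 2))) :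
    ∀ m : ℕ, ∃ r : ℝ, 0 ≤ r ∧ iteratedDeriv m Λ (1 / 2) = r :=
  cuspForm_superpositivity_general k f hf Λ hΛ
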